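/- arXiv:1209.0599 — 2 statements merged into one kernel-verified Lean document; each statement's English description precedes it below -/
import Mathlib

section
/- If at most one element per column of the p×p matrix X is constrained to zero, then in vectorized coordinates (Y = vec X, A = I ⊗ G) the matrix D = C*(A*A)^{-1}C is diagonal with entries (A*A)^{-1}_{jj} for the constrained indices j, and the constrained least-squares minimum satisfies δ² = δ_full² + Σ_j |Y_full(j)|² / ((A*A)^{-1})_{jj}. -/
/-!
Equality-constrained least squares is solved by a Lagrange correction of the unconstrained
solution: with `M = AᴴA` and `D = CᴴM⁻¹C`, the point `Y₀ = Y_full - M⁻¹ C D⁻¹ Cᴴ Y_full` satisfies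
`CᴴY₀ = 0`, and its normal-equation defect `Aᴴ(AY₀ - b) = -C D⁻¹ Cᴴ Y_full` is orthogonal to every
direction `x` with `Cᴴx = 0`. Pythagoras then gives both minimality of `Y₀` and
`‖AY₀ - b‖² = ‖AY_full - b‖² + (CᴴY_full)ᴴ D⁻¹ (CᴴY_full)`.

For `A = 1 ⊗ G` the Gram matrix `AᴴA = 1 ⊗ GᴴG` is block diagonal, one block per column of `X`,
and so is its inverse; when the constrained entries lie in distinct columns, `D` only sees
diagonal entries of `(AᴴA)⁻¹`, which are nonzero by positive definiteness.
-/

open Matrix Kronecker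
open scoped ComplexOrder

namespace Matrix

lemma mulVec_nonsing_inv_mulVec {R n : Type*} [CommRing R] [Fintype n] [DecidableEq n]
    {M : Matrix n n R} (hM : IsUnit M) (v : n → R) : M *ᵥ (M⁻¹ *ᵥ v) = v := by
  rw [mulVec_mulVec, mul_nonsing_inv _ ((isUnit_iff_isUnit_det M).mp hM), one_mulVec]

section LeastSquares

variable {𝕜 m n k : Type*} [RCLike 𝕜] [Fintype m] [Fintype n] [Fintype k]

def residualSq (A : Matrix m n 𝕜) (b : m → 𝕜) (Y : n → 𝕜) : ℝ :=
  ∑ q, ‖(A *ᵥ Y - b) q‖ ^ 2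

lemma ofReal_sum_norm_sq (u : m → 𝕜) : ((∑ q, ‖u q‖ ^ 2 : ℝ) : 𝕜) = star u ⬝ᵥ u := by
  simp [dotProduct, RCLike.conj_mul]

lemma sum_norm_sq_add_of_dotProduct_eq_zero {u v : m → 𝕜} (h : star v ⬝ᵥ u = 0) :
    ∑ q, ‖(u + v) q‖ ^ 2 = ∑ q, ‖u q‖ ^ 2 + ∑ q, ‖v q‖ ^ 2 := by
  have h' : star u ⬝ᵥ v = 0 := by rw [star_dotProduct, h, star_zero]
  apply RCLike.ofReal_injective (K := 𝕜)
  rw [RCLike.ofReal_add, ofReal_sum_norm_sq, ofReal_sum_norm_sq, ofReal_sum_norm_sq, star_add,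
    add_dotProduct, dotProduct_add, dotProduct_add, h, h', add_zero, zero_add]

lemma star_mulVec_dotProduct (A : Matrix m n 𝕜) (x : n → 𝕜) (y : m → 𝕜) :
    star (A *ᵥ x) ⬝ᵥ y = star x ⬝ᵥ (Aᴴ *ᵥ y) := by
  rw [star_mulVec, dotProduct_mulVec]

lemma residualSq_add_of_dotProduct_eq_zero (A : Matrix m n 𝕜) (b : m → 𝕜) {Y x : n → 𝕜}
    (h : star x ⬝ᵥ (Aᴴ *ᵥ (A *ᵥ Y - b)) = 0) :
    residualSq A b (Y + x) = residualSq A b Y + ∑ q, ‖(A *ᵥ x) q‖ ^ 2 := by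
  have hsplit : A *ᵥ (Y + x) - b = (A *ᵥ Y - b) + A *ᵥ x := by
    rw [mulVec_add]; abel
  rw [residualSq, hsplit, sum_norm_sq_add_of_dotProduct_eq_zero, residualSq]
  rwa [star_mulVec_dotProduct]

variable [DecidableEq n] [DecidableEq k]

theorem exists_isLeast_constrained_residualSq (A : Matrix m n 𝕜) (b : m → 𝕜) (C : Matrix n k 𝕜)
    (hA : Function.Injective A.mulVec) (hC : Function.Injective C.mulVec) :
    let Yfull := (Aᴴ * A)⁻¹ *ᵥ (Aᴴ *ᵥ b)
    ∃ δ2 : ℝ, IsLeast {r | ∃ Y, Cᴴ *ᵥ Y = 0 ∧ r = residualSq A b Y} δ2 ∧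
      (δ2 : 𝕜) = residualSq A b Yfull +
        star (Cᴴ *ᵥ Yfull) ⬝ᵥ ((Cᴴ * (Aᴴ * A)⁻¹ * C)⁻¹ *ᵥ (Cᴴ *ᵥ Yfull)) := by
  intro Yfull
  have hM : (Aᴴ * A).PosDef := PosDef.conjTranspose_mul_self A hA
  have hD : (Cᴴ * (Aᴴ * A)⁻¹ * C).PosDef := hM.inv.conjTranspose_mul_mul_same hC
  set M := Aᴴ * A
  set D := Cᴴ * M⁻¹ * C
  set c := Cᴴ *ᵥ Yfull
  set w := D⁻¹ *ᵥ c
  set z := M⁻¹ *ᵥ (C *ᵥ w)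
  have hMz : M *ᵥ z = C *ᵥ w := mulVec_nonsing_inv_mulVec hM.isUnit _
  have hCz : Cᴴ *ᵥ z = c := by
    rw [mulVec_mulVec, mulVec_mulVec]
    exact mulVec_nonsing_inv_mulVec hD.isUnit c
  have hnormal : Aᴴ *ᵥ (A *ᵥ Yfull - b) = 0 := by
    rw [mulVec_sub, mulVec_mulVec, mulVec_nonsing_inv_mulVec hM.isUnit, sub_self]
  have hY₀ : Aᴴ *ᵥ (A *ᵥ (Yfull - z) - b) = -(C *ᵥ w) := by
    rw [mulVec_sub A, sub_right_comm, mulVec_sub, hnormal, mulVec_mulVec, hMz, zero_sub]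
  refine ⟨residualSq A b (Yfull - z), ⟨⟨_, by rw [mulVec_sub, hCz, sub_self], rfl⟩, ?_⟩, ?_⟩
  · rintro _ ⟨Y, hY, rfl⟩
    have horth : star (Y - (Yfull - z)) ⬝ᵥ (Aᴴ *ᵥ (A *ᵥ (Yfull - z) - b)) = 0 := by
      rw [hY₀, dotProduct_neg, ← conjTranspose_conjTranspose C, ← star_mulVec_dotProduct,
        mulVec_sub, mulVec_sub, hY, hCz, sub_self, sub_zero, star_zero, zero_dotProduct, neg_zero]
    have hdecomp := residualSq_add_of_dotProduct_eq_zero A b horth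
    rw [add_sub_cancel] at hdecomp
    rw [hdecomp]
    exact le_add_of_nonneg_right (Finset.sum_nonneg fun q _ => sq_nonneg _)
  · have horth : star (-z) ⬝ᵥ (Aᴴ *ᵥ (A *ᵥ Yfull - b)) = 0 := by
      rw [hnormal, dotProduct_zero]
    rw [sub_eq_add_neg, residualSq_add_of_dotProduct_eq_zero A b horth, RCLike.ofReal_add,
      ofReal_sum_norm_sq, mulVec_neg, star_neg, neg_dotProduct, dotProduct_neg, neg_neg,
      star_mulVec_dotProduct, mulVec_mulVec, hMz, ← conjTranspose_conjTranspose C,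
      ← star_mulVec_dotProduct, hCz]

end LeastSquares

lemma star_dotProduct_inv_diagonal_mulVec {𝕜 k : Type*} [RCLike 𝕜] [Fintype k] [DecidableEq k]
    (c : k → 𝕜) {d : k → 𝕜} (hd : ∀ i, d i ≠ 0) :
    star c ⬝ᵥ ((diagonal d)⁻¹ *ᵥ c) = ∑ i, (‖c i‖ ^ 2 : 𝕜) / d i := by
  have hinv : (diagonal d)⁻¹ = diagonal d⁻¹ := by
    refine inv_eq_left_inv ?_
    rw [diagonal_mul_diagonal, ← diagonal_one]
    exact congrArg diagonal (funext fun i => inv_mul_cancel₀ (hd i))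
  rw [hinv]
  refine Finset.sum_congr rfl fun i _ => ?_
  rw [mulVec_diagonal, Pi.star_apply, RCLike.star_def, Pi.inv_apply, mul_left_comm,
    RCLike.conj_mul, div_eq_inv_mul]

section Selection

variable {R n k : Type*} [Semiring R] [DecidableEq n]

variable (R) in
def selectionMatrix (f : k → n) : Matrix n k R :=
  of fun q j => if q = f j then 1 else 0

variable [StarRing R] [Fintype n]

lemma conjTranspose_selectionMatrix_mul_mul [Fintype k] (f : k → n) (B : Matrix n n R) :
    (selectionMatrix R f)ᴴ * B * selectionMatrix R f = B.submatrix f f := by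
  ext i j
  simp [selectionMatrix, mul_apply, apply_ite star]

lemma conjTranspose_selectionMatrix_mulVec (f : k → n) (Y : n → R) :
    (selectionMatrix R f)ᴴ *ᵥ Y = fun i => Y (f i) := by
  ext i
  simp [selectionMatrix, mulVec, dotProduct, apply_ite star]

lemma selectionMatrix_mulVec_injective [Fintype k] [DecidableEq k] {f : k → n}
    (hf : Function.Injective f) : Function.Injective (selectionMatrix R f).mulVec := by
  refine Function.LeftInverse.injective (g := ((selectionMatrix R f)ᴴ *ᵥ ·)) fun w => ?_
  change _ *ᵥ (_ *ᵥ w) = w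
  rw [mulVec_mulVec, ← Matrix.mul_one (selectionMatrix R f)ᴴ,
    conjTranspose_selectionMatrix_mul_mul, submatrix_one f hf, one_mulVec]

end Selection

section Kronecker

variable {R l o : Type*} [DecidableEq l]

lemma one_kronecker_submatrix_eq_diagonal {k : Type*} [MulZeroOneClass R] [DecidableEq k]
    (B : Matrix o o R) {f : k → l × o} (hf : Function.Injective fun i => (f i).1) :
    ((1 : Matrix l l R) ⊗ₖ B).submatrix f f =
      diagonal fun i => ((1 : Matrix l l R) ⊗ₖ B) (f i) (f i) := by
  ext i j
  by_cases hij : i = j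
  · subst hij; simp
  · simp [diagonal_apply_ne _ hij, one_apply_ne (hf.ne hij)]

variable [CommRing R] [Fintype l] [Fintype o] [DecidableEq o]

lemma isUnit_one_kronecker {G : Matrix o o R} (hG : IsUnit G) :
    IsUnit ((1 : Matrix l l R) ⊗ₖ G) := by
  rw [isUnit_iff_isUnit_det, det_kronecker, det_one, one_pow, one_mul]
  exact ((isUnit_iff_isUnit_det G).mp hG).pow _

lemma inv_conjTranspose_mul_self_one_kronecker [StarRing R] (G : Matrix o o R) :
    (((1 : Matrix l l R) ⊗ₖ G)ᴴ * ((1 : Matrix l l R) ⊗ₖ G))⁻¹ = 1 ⊗ₖ (Gᴴ * G)⁻¹ := by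
  rw [conjTranspose_kronecker, conjTranspose_one, ← mul_kronecker_mul, Matrix.one_mul,
    inv_kronecker, inv_one]

end Kronecker

end Matrix

/-- with A = I ⊗ G and at most one constrained element per column
of X (the constrained vectorized indices have distinct first components),
D = C*(A*A)⁻¹C is diagonal with entries (A*A)⁻¹_{jj}, and the constrained
least-squares minimum satisfies δ² = δ_full² + Σ_j |Y_full(j)|²/((A*A)⁻¹)_{jj}. -/
theorem stmt7 {p k : ℕ} (G : Matrix (Fin p) (Fin p) ℂ) (hG : IsUnit G)
    (b : Fin p × Fin p → ℂ) (f : Fin k → Fin p × Fin p)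
    (hf : Function.Injective fun i => (f i).1) :
    let A := (1 : Matrix (Fin p) (Fin p) ℂ) ⊗ₖ G
    let C : Matrix (Fin p × Fin p) (Fin k) ℂ :=
      Matrix.of fun q j => if q = f j then 1 else 0
    let D : Matrix (Fin k) (Fin k) ℂ := Cᴴ * (Aᴴ * A)⁻¹ * C
    let Yfull : Fin p × Fin p → ℂ := (Aᴴ * A)⁻¹.mulVec (Aᴴ.mulVec b)
    let obj : (Fin p × Fin p → ℂ) → ℝ := fun Y => ∑ q, ‖A.mulVec Y q - b q‖ ^ 2
    D = Matrix.diagonal (fun i => (Aᴴ * A)⁻¹ (f i) (f i)) ∧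
    ∃ δ2 : ℝ,
      IsLeast {r : ℝ | ∃ Y : Fin p × Fin p → ℂ, (∀ i, Y (f i) = 0) ∧ r = obj Y} δ2 ∧
      (δ2 : ℂ) = (obj Yfull : ℂ) +
        ∑ i, (‖Yfull (f i)‖ ^ 2 : ℂ) / (Aᴴ * A)⁻¹ (f i) (f i) := by
  intro A C D Yfull obj
  have hD : D = diagonal fun i => (Aᴴ * A)⁻¹ (f i) (f i) := by
    change (selectionMatrix ℂ f)ᴴ * (Aᴴ * A)⁻¹ * selectionMatrix ℂ f = _
    rw [conjTranspose_selectionMatrix_mul_mul, inv_conjTranspose_mul_self_one_kronecker]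
    exact one_kronecker_submatrix_eq_diagonal _ hf
  have hA : Function.Injective A.mulVec :=
    mulVec_injective_iff_isUnit.mpr (isUnit_one_kronecker hG)
  have hC : Function.Injective C.mulVec :=
    selectionMatrix_mulVec_injective (Function.Injective.of_comp (f := Prod.fst) hf)
  have hCY : ∀ Y, Cᴴ *ᵥ Y = fun i => Y (f i) := conjTranspose_selectionMatrix_mulVec f
  have hdiag : ∀ i, (Aᴴ * A)⁻¹ (f i) (f i) ≠ 0 := fun i =>
    (PosDef.conjTranspose_mul_self A hA).inv.diag_pos.ne'
  obtain ⟨δ2, hleast, hδ2⟩ := exists_isLeast_constrained_residualSq A b C hA hC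
  refine ⟨hD, δ2, ?_, hδ2.trans ?_⟩
  · simp only [hCY, funext_iff, Pi.zero_apply] at hleast
    exact hleast
  · rw [show Cᴴ * (Aᴴ * A)⁻¹ * C = D from rfl, hD, star_dotProduct_inv_diagonal_mulVec _ hdiag,
      hCY]
    rfl
end

section
/- Greedy solvability lemma: consider a finite family of structures indexed by subsets of a ground set of links, with true structure T. Call a structure S allowable if T ⊆ S. If for every link count k with |T| ≤ k ≤ p²−p, every allowable structure with k links has strictly smaller cost δ than every non-allowable structure with k links, then the greedy algorithm that starts from the full structure and at each step removes the link yielding the minimum-cost substructure reaches T. -/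
/-- greedy solvability lemma.  Structures are subsets of a
finite link set; a structure is allowable if it contains the true structure T.
If every allowable structure has strictly smaller cost δ than every
non-allowable structure with the same number of links, then any run of the
greedy link-removal algorithm (start from the full set, at each step remove
the link giving the minimum-cost substructure) reaches T. -/
theorem stmt12 {α : Type*} [Fintype α] [DecidableEq α]
    (T : Finset α) (δ : Finset α → ℝ)
    (hsep : ∀ S₁ S₂ : Finset α, S₁.card = S₂.card → T ⊆ S₁ → ¬ T ⊆ S₂ →
      δ S₁ < δ S₂)
    (S : ℕ → Finset α) (hS0 : S 0 = Finset.univ)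
    (hstep : ∀ j < Fintype.card α, ∃ e ∈ S j, S (j + 1) = (S j).erase e ∧
      ∀ e' ∈ S j, δ ((S j).erase e) ≤ δ ((S j).erase e')) :
    S (Fintype.card α - T.card) = T := by
  have hTcard : T.card ≤ Fintype.card α := Finset.card_le_univ T
  have key : ∀ j ≤ Fintype.card α - T.card,
      T ⊆ S j ∧ (S j).card = Fintype.card α - j := by
    intro j hj
    induction j with
    | zero => simp [hS0]
    | succ n ih =>
      obtain ⟨hTn, hcard⟩ := ih (by omega)
      have hn : n < Fintype.card α := by omega
      obtain ⟨e, he, heq, hmin⟩ := hstep n hn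
      have hTsub : T ⊂ S n := by
        refine lt_of_le_of_ne hTn ?_
        intro h
        rw [← h] at hcard
        omega
      obtain ⟨e', he'S, he'T⟩ := Finset.exists_of_ssubset hTsub
      have hTsube' : T ⊆ (S n).erase e' := fun x hx =>
        Finset.mem_erase.mpr ⟨fun h => he'T (h ▸ hx), hTn hx⟩
      have hTe : T ⊆ (S n).erase e := by
        by_contra hc
        have h1 := hsep _ _ (by
          rw [Finset.card_erase_of_mem he'S, Finset.card_erase_of_mem he]) hTsube' hc
        have h2 := hmin e' he'S
        linarith
      refine ⟨heq ▸ hTe, ?_⟩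
      rw [heq, Finset.card_erase_of_mem he, hcard]
      omega
  obtain ⟨hsub, hcard⟩ := key _ le_rfl
  exact (Finset.eq_of_subset_of_card_le hsub (by omega)).symm
end
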